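/- arXiv:2111.09532 — 2 statements merged into one kernel-verified Lean document; each statement's English description precedes it below -/
import Mathlib

section
/- For every real number t, −(1/2)·(4(1+4t²)² + 2(1+3t)² + 2(1−3t)²) + (1/7)·(4(1+4t²) + 2(1+3t) + 2(1−3t))² = 36/7 + (18/7)t² + (32/7)t⁴. Consequently this quantity is ≥ 36/7 for all t, with equality if and only if t = 0. (This is the computation of the σ₂-curvature σ₂(g_t) of the metric g_t = (1+4t²)⁻¹g_{S²} + (1+4t²)⁻¹g_{S²} + (1+3t)⁻¹g_{S²} + (1−3t)⁻¹g_{S²} on S²×S²×S²×S², whose Ricci tensor is diagonal with eigenvalues 1+4t² (multiplicity 4), 1+3t (multiplicity 2), 1−3t (multiplicity 2), using σ₂ = −(1/2)|Ric|² + (n/(8(n−1)))R² with n = 8, so n/(8(n−1)) = 1/7; the value at t = 0 is σ₂(ḡ) = 36/7 for the product of round spheres.) -/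
/-- The σ₂-curvature of the counterexample metrics `g_t` on
`S²×S²×S²×S²`: for every real `t`,
`−(1/2)(4(1+4t²)² + 2(1+3t)² + 2(1−3t)²) + (1/7)(4(1+4t²) + 2(1+3t) + 2(1−3t))²
  = 36/7 + (18/7)t² + (32/7)t⁴`,
hence this quantity is `≥ 36/7`, with equality iff `t = 0`. -/
theorem sigma2_counterexample_computation (t : ℝ) :
    -(1 / 2) * (4 * (1 + 4 * t ^ 2) ^ 2 + 2 * (1 + 3 * t) ^ 2 + 2 * (1 - 3 * t) ^ 2)
        + (1 / 7) * (4 * (1 + 4 * t ^ 2) + 2 * (1 + 3 * t) + 2 * (1 - 3 * t)) ^ 2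
      = 36 / 7 + (18 / 7) * t ^ 2 + (32 / 7) * t ^ 4 ∧
    36 / 7 ≤
      -(1 / 2) * (4 * (1 + 4 * t ^ 2) ^ 2 + 2 * (1 + 3 * t) ^ 2 + 2 * (1 - 3 * t) ^ 2)
        + (1 / 7) * (4 * (1 + 4 * t ^ 2) + 2 * (1 + 3 * t) + 2 * (1 - 3 * t)) ^ 2 ∧
    (-(1 / 2) * (4 * (1 + 4 * t ^ 2) ^ 2 + 2 * (1 + 3 * t) ^ 2 + 2 * (1 - 3 * t) ^ 2)
        + (1 / 7) * (4 * (1 + 4 * t ^ 2) + 2 * (1 + 3 * t) + 2 * (1 - 3 * t)) ^ 2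
      = 36 / 7 ↔ t = 0) := by
  have h : -(1 / 2) * (4 * (1 + 4 * t ^ 2) ^ 2 + 2 * (1 + 3 * t) ^ 2 + 2 * (1 - 3 * t) ^ 2)
        + (1 / 7) * (4 * (1 + 4 * t ^ 2) + 2 * (1 + 3 * t) + 2 * (1 - 3 * t)) ^ 2
      = 36 / 7 + (18 / 7) * t ^ 2 + (32 / 7) * t ^ 4 := by ring
  refine ⟨h, ?_, ?_⟩
  · rw [h]; nlinarith [sq_nonneg t, sq_nonneg (t^2)]
  · rw [h]
    constructor
    · intro he
      have h2 : t ^ 2 = 0 := by nlinarith [sq_nonneg t, sq_nonneg (t ^ 2)]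
      exact pow_eq_zero_iff (by norm_num) |>.mp h2
    · rintro rfl; ring
end

section
/- Let n = 8 and t ∈ ℝ, and let B_t be the 8×8 real diagonal matrix with diagonal entries (1+4t², 1+4t², 1+4t², 1+4t², 1+3t, 1+3t, 1−3t, 1−3t). Let A_t := B_t − ((tr B_t)/14)·I be the associated Schouten matrix. Then the second elementary symmetric polynomial of the eigenvalues of A_t equals 36/7 + (18/7)t² + (32/7)t⁴; in particular it is ≥ 36/7 with equality if and only if t = 0. (B_t is the Ricci tensor of the product metric g_t on S²×S²×S²×S² in an orthonormal frame, so this states σ₂(g_t) ≥ σ₂(ḡ) = 36/7 with equality iff t = 0.) -/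
/-- The second elementary symmetric polynomial `Σ_{i<j} λᵢλⱼ` of a family of reals. -/
noncomputable def sigma2 {n : ℕ} (lam : Fin n → ℝ) : ℝ :=
  ∑ p ∈ Finset.univ.filter (fun p : Fin n × Fin n => p.1 < p.2), lam p.1 * lam p.2

/-- The Ricci matrix of the counterexample metric `g_t` on `S²×S²×S²×S²`:
diagonal with entries `1+4t²` (×4), `1+3t` (×2), `1−3t` (×2). -/
noncomputable def ricciCounterexample (t : ℝ) : Matrix (Fin 8) (Fin 8) ℝ :=
  Matrix.diagonal
    ![1 + 4 * t ^ 2, 1 + 4 * t ^ 2, 1 + 4 * t ^ 2, 1 + 4 * t ^ 2,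
      1 + 3 * t, 1 + 3 * t, 1 - 3 * t, 1 - 3 * t]

/-- The associated Schouten matrix `A_t = B_t − (tr B_t/14)·I` (here `2(n−1) = 14`). -/
noncomputable def schoutenCounterexample (t : ℝ) : Matrix (Fin 8) (Fin 8) ℝ :=
  ricciCounterexample t - ((ricciCounterexample t).trace / 14) • (1 : Matrix (Fin 8) (Fin 8) ℝ)

theorem schoutenCounterexample_isHermitian (t : ℝ) :
    (schoutenCounterexample t).IsHermitian := by
  have h1 : (((ricciCounterexample t).trace / 14) •
      (1 : Matrix (Fin 8) (Fin 8) ℝ)).IsHermitian := by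
    simp [Matrix.IsHermitian, Matrix.conjTranspose_smul]
  exact (Matrix.isHermitian_diagonal _).sub h1

/-!
For a real symmetric matrix `A`, `σ₂` of its eigenvalues equals `((tr A)² - tr A²) / 2`, and both
traces are invariant under the orthogonal conjugation diagonalising `A`. The Schouten matrix of
the counterexample is itself diagonal, so `σ₂` is computed from its diagonal entries
`(3 + 20t²)/7` (four times), `(3 ± 21t - 8t²)/7` (twice each), giving `36/7 + (18/7)t² + (32/7)t⁴`.
-/

open Matrix Finset

theorem two_mul_sigma2 {n : ℕ} (lam : Fin n → ℝ) :
    2 * sigma2 lam = (∑ i, lam i) ^ 2 - ∑ i, lam i ^ 2 := by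
  set f : Fin n × Fin n → ℝ := fun p => lam p.1 * lam p.2
  have hsq : (∑ i, lam i) ^ 2 = ∑ p, f p := by
    rw [sq, sum_mul_sum, Fintype.sum_prod_type]
  have hsplit : ∑ p, f p =
      ∑ p with p.1 < p.2, f p + ∑ p with p.2 < p.1, f p + ∑ p with p.1 = p.2, f p := by
    simp only [sum_filter, ← sum_add_distrib]
    refine sum_congr rfl fun p _ => ?_
    rcases lt_trichotomy p.1 p.2 with h | h | h
    · simp [h, h.not_gt, h.ne]
    · simp [h]
    · simp [h, h.not_gt, h.ne']
  have hswap : ∑ p with p.2 < p.1, f p = sigma2 lam :=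
    sum_equiv (Equiv.prodComm _ _) (by simp) (fun p _ => mul_comm _ _)
  have hdiag : ∑ p with p.1 = p.2, f p = ∑ i, lam i ^ 2 := by
    simp [f, sum_filter, Fintype.sum_prod_type, sq]
  rw [hsq, hsplit, hswap, hdiag, sigma2]
  ring

theorem Matrix.IsHermitian.trace_mul_self {𝕜 n : Type*} [RCLike 𝕜] [Fintype n] [DecidableEq n]
    {A : Matrix n n 𝕜} (hA : A.IsHermitian) :
    (A * A).trace = ∑ i, (hA.eigenvalues i : 𝕜) ^ 2 := by
  conv_lhs => rw [hA.spectral_theorem, ← map_mul, Unitary.conjStarAlgAut_apply, trace_mul_cycle,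
    Unitary.coe_star_mul_self, one_mul, diagonal_mul_diagonal, trace_diagonal]
  simp [sq]

theorem Matrix.IsHermitian.two_mul_sigma2_eigenvalues {n : ℕ} {A : Matrix (Fin n) (Fin n) ℝ}
    (hA : A.IsHermitian) : 2 * sigma2 hA.eigenvalues = A.trace ^ 2 - (A * A).trace := by
  rw [two_mul_sigma2, hA.trace_mul_self, hA.trace_eq_sum_eigenvalues]
  simp

theorem trace_ricciCounterexample (t : ℝ) : (ricciCounterexample t).trace = 8 + 16 * t ^ 2 := by
  simp [ricciCounterexample, trace_diagonal, Fin.sum_univ_eight]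
  ring

theorem schoutenCounterexample_eq_diagonal (t : ℝ) :
    schoutenCounterexample t = diagonal
      ![(3 + 20 * t ^ 2) / 7, (3 + 20 * t ^ 2) / 7, (3 + 20 * t ^ 2) / 7, (3 + 20 * t ^ 2) / 7,
        (3 + 21 * t - 8 * t ^ 2) / 7, (3 + 21 * t - 8 * t ^ 2) / 7,
        (3 - 21 * t - 8 * t ^ 2) / 7, (3 - 21 * t - 8 * t ^ 2) / 7] := by
  rw [schoutenCounterexample, trace_ricciCounterexample, ricciCounterexample, smul_one_eq_diagonal,
    diagonal_sub]
  congr 1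
  ext i
  fin_cases i <;> simp <;> ring

theorem sigma2_schoutenCounterexample_eigenvalues (t : ℝ) :
    sigma2 (schoutenCounterexample_isHermitian t).eigenvalues
      = 36 / 7 + (18 / 7) * t ^ 2 + (32 / 7) * t ^ 4 := by
  have h := (schoutenCounterexample_isHermitian t).two_mul_sigma2_eigenvalues
  have htraces : (schoutenCounterexample t).trace ^ 2
      - (schoutenCounterexample t * schoutenCounterexample t).trace
      = 2 * (36 / 7 + (18 / 7) * t ^ 2 + (32 / 7) * t ^ 4) := by
    rw [schoutenCounterexample_eq_diagonal, diagonal_mul_diagonal, trace_diagonal, trace_diagonal]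
    simp [Fin.sum_univ_eight]
    ring
  linarith

/-- `σ₂` of the eigenvalues of the Schouten matrix of the counterexample
Ricci matrix equals `36/7 + (18/7)t² + (32/7)t⁴`; in particular it is `≥ 36/7` with
equality iff `t = 0`. -/
theorem sigma2_counterexample (t : ℝ) :
    sigma2 (schoutenCounterexample_isHermitian t).eigenvalues
      = 36 / 7 + (18 / 7) * t ^ 2 + (32 / 7) * t ^ 4 ∧
    36 / 7 ≤ sigma2 (schoutenCounterexample_isHermitian t).eigenvalues ∧
    (sigma2 (schoutenCounterexample_isHermitian t).eigenvalues = 36 / 7 ↔ t = 0) := by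
  have hsigma2 := sigma2_schoutenCounterexample_eigenvalues t
  have hpos : 0 ≤ (18 / 7) * t ^ 2 + (32 / 7) * t ^ 4 := by positivity
  refine ⟨hsigma2, by linarith, ?_⟩
  rw [hsigma2]
  constructor
  · intro h
    have ht2 : t ^ 2 = 0 := by nlinarith [sq_nonneg t, sq_nonneg (t ^ 2)]
    exact pow_eq_zero_iff two_ne_zero |>.mp ht2
  · rintro rfl
    norm_num
end
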